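/- (Helicity conservation for incompressible Euler.) Let u : ℝ⁴ → ℝ³, p : ℝ⁴ → ℝ be smooth with ω = ∇×u and E = ½|u|² + p, and suppose uⁱ_t + Σⱼuʲuⁱⱼ + pᵢ = 0 (i = 1,2,3) and ∇·u = 0. Then ∂_t(u·ω) + ∇·[ u × ∇E + ((ω × u) × u) ] = 0 pointwise. Moreover, for arbitrary smooth u, p (no equations assumed) the identity ∂_t(u·ω) + ∇·[u×∇E + (ω×u)×u] = Σᵢ ωⁱΔᵢ + Σ_{i,j,k} uⁱ ε^{ijk} Dⱼ Δ_k holds, where Δᵢ = uⁱ_t + Σⱼuʲuⁱⱼ + pᵢ. -/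

import Mathlib

/-- Partial derivative of a function of n real variables in direction i. -/
noncomputable def pd {n : ℕ} (i : Fin n) (f : (Fin n → ℝ) → ℝ) (x : Fin n → ℝ) : ℝ :=
  fderiv ℝ f x (Pi.single i 1)

/-- The spatial part of a space-time point (coordinate 0 is time). -/
def sp (x : Fin 4 → ℝ) : Fin 3 → ℝ := fun i => x i.succ

/-- The Levi-Civita symbol on three indices. -/
def eps (i j k : Fin 3) : ℝ :=
  if (i, j, k) = (0, 1, 2) ∨ (i, j, k) = (1, 2, 0) ∨ (i, j, k) = (2, 0, 1) then 1
  else if (i, j, k) = (0, 2, 1) ∨ (i, j, k) = (2, 1, 0) ∨ (i, j, k) = (1, 0, 2) then -1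
  else 0

lemma contDiff_pd {n : ℕ} (i : Fin n) {f : (Fin n → ℝ) → ℝ} (hf : ContDiff ℝ (⊤ : ℕ∞) f) :
    ContDiff ℝ (⊤ : ℕ∞) (pd i f) :=
  (hf.fderiv_right (by simp)).clm_apply contDiff_const

lemma pd_add {n : ℕ} (i : Fin n) {f g : (Fin n → ℝ) → ℝ} {x}
    (hf : DifferentiableAt ℝ f x) (hg : DifferentiableAt ℝ g x) :
    pd i (fun y => f y + g y) x = pd i f x + pd i g x := by
  simp [pd, fderiv_fun_add hf hg]

lemma pd_sub {n : ℕ} (i : Fin n) {f g : (Fin n → ℝ) → ℝ} {x}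
    (hf : DifferentiableAt ℝ f x) (hg : DifferentiableAt ℝ g x) :
    pd i (fun y => f y - g y) x = pd i f x - pd i g x := by
  simp [pd, fderiv_fun_sub hf hg]

lemma pd_mul {n : ℕ} (i : Fin n) {f g : (Fin n → ℝ) → ℝ} {x}
    (hf : DifferentiableAt ℝ f x) (hg : DifferentiableAt ℝ g x) :
    pd i (fun y => f y * g y) x = pd i f x * g x + f x * pd i g x := by
  simp [pd, fderiv_fun_mul hf hg]; ring

lemma pd_const {n : ℕ} (i : Fin n) (c : ℝ) (x : Fin n → ℝ) :
    pd i (fun _ => c) x = 0 := by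
  simp [pd]

lemma pd_eq_snd {n : ℕ} (i j : Fin n) {f : (Fin n → ℝ) → ℝ} (hf : ContDiff ℝ (⊤ : ℕ∞) f) (x) :
    pd i (pd j f) x = fderiv ℝ (fderiv ℝ f) x (Pi.single i 1) (Pi.single j 1) := by
  unfold pd
  rw [fderiv_clm_apply (((hf.fderiv_right (m := (⊤ : ℕ∞)) (by simp)).differentiable (by simp)).differentiableAt)
    (differentiableAt_const _)]
  simp

lemma pd_comm {n : ℕ} (i j : Fin n) {f : (Fin n → ℝ) → ℝ} (hf : ContDiff ℝ (⊤ : ℕ∞) f) (x) :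
    pd i (pd j f) x = pd j (pd i f) x := by
  rw [pd_eq_snd i j hf, pd_eq_snd j i hf]
  exact second_derivative_symmetric (f' := fderiv ℝ f)
    (fun y => (hf.differentiable (by simp) y).hasFDerivAt)
    (((hf.fderiv_right (m := (⊤ : ℕ∞)) (by simp)).differentiable (by simp) x).hasFDerivAt) _ _

set_option maxHeartbeats 4000000 in
/-- Helicity conservation for incompressible Euler: the helicity identity
∂_t(u·ω) + ∇·[u×∇E + (ω×u)×u] = Σᵢ ωⁱΔᵢ + Σ uⁱε^{ijk}DⱼΔ_k holds for arbitrary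
smooth u, p, and on solutions of the incompressible Euler equations the helicity
conservation law ∂_t(u·ω) + ∇·[u×∇E + (ω×u)×u] = 0 holds.
Coordinates: 0 = t, 1,2,3 spatial; ω = ∇×u, E = ½|u|² + p. -/
theorem euler_helicity_conservation
    (u : Fin 3 → (Fin 4 → ℝ) → ℝ) (p : (Fin 4 → ℝ) → ℝ)
    (hu : ∀ i, ContDiff ℝ (⊤ : ℕ∞) (u i)) (hp : ContDiff ℝ (⊤ : ℕ∞) p)
    (ω : Fin 3 → (Fin 4 → ℝ) → ℝ)
    (hω0 : ∀ y, ω 0 y = pd 2 (u 2) y - pd 3 (u 1) y)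
    (hω1 : ∀ y, ω 1 y = pd 3 (u 0) y - pd 1 (u 2) y)
    (hω2 : ∀ y, ω 2 y = pd 1 (u 1) y - pd 2 (u 0) y)
    (E : (Fin 4 → ℝ) → ℝ) (hE : ∀ y, E y = (1/2) * (∑ i, u i y ^ 2) + p y)
    (Δ : Fin 3 → (Fin 4 → ℝ) → ℝ)
    (hΔ : ∀ (i : Fin 3) y, Δ i y =
      pd 0 (u i) y + (∑ j, u j y * pd j.succ (u i) y) + pd i.succ p y)
    (flux : Fin 3 → (Fin 4 → ℝ) → ℝ)
    (hflux : ∀ (i : Fin 3) y, flux i y =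
      crossProduct (fun m => u m y) (fun m => pd m.succ E y) i
      + crossProduct (crossProduct (fun m => ω m y) (fun m => u m y)) (fun m => u m y) i) :
    (∀ x, pd 0 (fun y => ∑ i, u i y * ω i y) x + (∑ i, pd i.succ (flux i) x)
        = (∑ i, ω i x * Δ i x)
          + ∑ i, ∑ j, ∑ k, u i x * eps i j k * pd j.succ (Δ k) x)
    ∧ ((∀ (i : Fin 3) x, Δ i x = 0) → (∀ x, ∑ i, pd i.succ (u i) x = 0) →
        ∀ x, pd 0 (fun y => ∑ i, u i y * ω i y) x + (∑ i, pd i.succ (flux i) x) = 0) := by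
  have du : ∀ i, Differentiable ℝ (u i) := fun i => (hu i).differentiable (by simp)
  have du' : ∀ i (a : Fin 4), Differentiable ℝ (pd a (u i)) :=
    fun i a => (contDiff_pd a (hu i)).differentiable (by simp)
  have dpp : Differentiable ℝ p := hp.differentiable (by simp)
  have dp' : ∀ (a : Fin 4), Differentiable ℝ (pd a p) :=
    fun a => (contDiff_pd a hp).differentiable (by simp)
  have s0 : (0 : Fin 3).succ = 1 := rfl
  have s1 : (1 : Fin 3).succ = 2 := rfl
  have s2 : (2 : Fin 3).succ = 3 := rfl
  have hEf : E = fun y => (1/2) * (∑ i, u i y ^ 2) + p y := funext hE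
  have hpdE : ∀ (m : Fin 4) (y : Fin 4 → ℝ), pd m E y =
      u 0 y * pd m (u 0) y + u 1 y * pd m (u 1) y + u 2 y * pd m (u 2) y + pd m p y := by
    intro m y
    have : E = fun z => ((u 0 z * u 0 z + u 1 z * u 1 z + u 2 z * u 2 z) * (1/2) + p z) := by
      funext z; rw [hE z, Fin.sum_univ_three]; ring
    rw [this]
    simp (disch := fun_prop) only [pd_add, pd_mul, pd_const]
    ring
  have hΔfun : ∀ k, Δ k = fun y => pd 0 (u k) y
      + (u 0 y * pd 1 (u k) y + u 1 y * pd 2 (u k) y + u 2 y * pd 3 (u k) y)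
      + pd k.succ p y := by
    intro k; funext y; rw [hΔ k y, Fin.sum_univ_three, s0, s1, s2]
  have hfl := fun i => funext (hflux i)
  have main : ∀ x, pd 0 (fun y => ∑ i, u i y * ω i y) x + (∑ i, pd i.succ (flux i) x)
      = (∑ i, ω i x * Δ i x)
        + ∑ i, ∑ j, ∑ k, u i x * eps i j k * pd j.succ (Δ k) x := by
    intro x
    simp only [hfl, hΔfun, Fin.sum_univ_three, s0, s1, s2, cross_apply, hω0, hω1, hω2, hpdE,
      Matrix.cons_val_zero, Matrix.cons_val_one, Matrix.head_cons, Matrix.cons_val_two,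
      Matrix.tail_cons]
    simp [eps, Prod.ext_iff]
    simp (disch := fun_prop) only [pd_add, pd_sub, pd_mul, pd_const]
    -- canonicalize second derivatives
    have c10u0 : ∀ z, pd 1 (pd 0 (u 0)) z = pd 0 (pd 1 (u 0)) z := pd_comm 1 0 (hu 0)
    have c20u0 : ∀ z, pd 2 (pd 0 (u 0)) z = pd 0 (pd 2 (u 0)) z := pd_comm 2 0 (hu 0)
    have c30u0 : ∀ z, pd 3 (pd 0 (u 0)) z = pd 0 (pd 3 (u 0)) z := pd_comm 3 0 (hu 0)
    have c21u0 : ∀ z, pd 2 (pd 1 (u 0)) z = pd 1 (pd 2 (u 0)) z := pd_comm 2 1 (hu 0)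
    have c31u0 : ∀ z, pd 3 (pd 1 (u 0)) z = pd 1 (pd 3 (u 0)) z := pd_comm 3 1 (hu 0)
    have c32u0 : ∀ z, pd 3 (pd 2 (u 0)) z = pd 2 (pd 3 (u 0)) z := pd_comm 3 2 (hu 0)
    have c10u1 : ∀ z, pd 1 (pd 0 (u 1)) z = pd 0 (pd 1 (u 1)) z := pd_comm 1 0 (hu 1)
    have c20u1 : ∀ z, pd 2 (pd 0 (u 1)) z = pd 0 (pd 2 (u 1)) z := pd_comm 2 0 (hu 1)
    have c30u1 : ∀ z, pd 3 (pd 0 (u 1)) z = pd 0 (pd 3 (u 1)) z := pd_comm 3 0 (hu 1)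
    have c21u1 : ∀ z, pd 2 (pd 1 (u 1)) z = pd 1 (pd 2 (u 1)) z := pd_comm 2 1 (hu 1)
    have c31u1 : ∀ z, pd 3 (pd 1 (u 1)) z = pd 1 (pd 3 (u 1)) z := pd_comm 3 1 (hu 1)
    have c32u1 : ∀ z, pd 3 (pd 2 (u 1)) z = pd 2 (pd 3 (u 1)) z := pd_comm 3 2 (hu 1)
    have c10u2 : ∀ z, pd 1 (pd 0 (u 2)) z = pd 0 (pd 1 (u 2)) z := pd_comm 1 0 (hu 2)
    have c20u2 : ∀ z, pd 2 (pd 0 (u 2)) z = pd 0 (pd 2 (u 2)) z := pd_comm 2 0 (hu 2)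
    have c30u2 : ∀ z, pd 3 (pd 0 (u 2)) z = pd 0 (pd 3 (u 2)) z := pd_comm 3 0 (hu 2)
    have c21u2 : ∀ z, pd 2 (pd 1 (u 2)) z = pd 1 (pd 2 (u 2)) z := pd_comm 2 1 (hu 2)
    have c31u2 : ∀ z, pd 3 (pd 1 (u 2)) z = pd 1 (pd 3 (u 2)) z := pd_comm 3 1 (hu 2)
    have c32u2 : ∀ z, pd 3 (pd 2 (u 2)) z = pd 2 (pd 3 (u 2)) z := pd_comm 3 2 (hu 2)
    have c10p : ∀ z, pd 1 (pd 0 p) z = pd 0 (pd 1 p) z := pd_comm 1 0 hp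
    have c20p : ∀ z, pd 2 (pd 0 p) z = pd 0 (pd 2 p) z := pd_comm 2 0 hp
    have c30p : ∀ z, pd 3 (pd 0 p) z = pd 0 (pd 3 p) z := pd_comm 3 0 hp
    have c21p : ∀ z, pd 2 (pd 1 p) z = pd 1 (pd 2 p) z := pd_comm 2 1 hp
    have c31p : ∀ z, pd 3 (pd 1 p) z = pd 1 (pd 3 p) z := pd_comm 3 1 hp
    have c32p : ∀ z, pd 3 (pd 2 p) z = pd 2 (pd 3 p) z := pd_comm 3 2 hp
    simp only [c10u0, c20u0, c30u0, c21u0, c31u0, c32u0,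
      c10u1, c20u1, c30u1, c21u1, c31u1, c32u1,
      c10u2, c20u2, c30u2, c21u2, c31u2, c32u2,
      c10p, c20p, c30p, c21p, c31p, c32p]
    ring
  refine ⟨main, fun h0 _ x => ?_⟩
  rw [main x]
  have hz : ∀ k : Fin 3, Δ k = fun _ => (0:ℝ) := fun k => funext fun y => h0 k y
  simp [hz, pd_const]
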